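/- Let 𝓐=(A,δ^A,σ^A,τ^A) and 𝓑=(B,δ^B,σ^B,τ^B) be fuzzy automata over a complete residuated lattice 𝓛 and alphabet X such that there exists at least one forward bisimulation between 𝓐 and 𝓑. Then there exists the greatest forward bisimulation between 𝓐 and 𝓑, i.e., a forward bisimulation φ with χ ≤ φ for every forward bisimulation χ between 𝓐 and 𝓑; moreover, this greatest forward bisimulation is a partial fuzzy function. -/
import Mathlib


universe u

/-- A complete residuated lattice: a complete lattice with a commutative monoid
structure whose unit is the top element, together with a residuum operation
forming an adjoint pair with the multiplication. -/
class CompleteResiduatedLattice (L : Type*) extends CompleteLattice L, CommMonoid L where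
  /-- the residuum operation `→` -/
  res : L → L → L
  /-- the adjunction property -/
  adjunction : ∀ x y z : L, x * y ≤ z ↔ x ≤ res y z
  /-- the multiplicative unit `1` is the greatest element -/
  one_eq_top : (1 : L) = ⊤

namespace FuzzyAutomataBisim

/-- A fuzzy automaton over `L` and alphabet `X`, with state set `A`. -/
structure FuzzyAutomaton (L : Type*) [CompleteResiduatedLattice L] (X A : Type*) where
  δ : A → X → A → L
  σ : A → L
  τ : A → L

variable {L X A B C : Type*} [CompleteResiduatedLattice L]

/-- biresiduum `x ↔ y = (x → y) ⊓ (y → x)` -/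
def bires (x y : L) : L :=
  CompleteResiduatedLattice.res x y ⊓ CompleteResiduatedLattice.res y x

/-- inverse of a fuzzy relation -/
def inv (φ : A → B → L) : B → A → L := fun b a => φ a b

/-- composition of fuzzy relations -/
def rcomp (φ : A → B → L) (ψ : B → C → L) : A → C → L := fun a c => ⨆ b, φ a b * ψ b c

/-- composition of a fuzzy set with a fuzzy relation -/
def scomp (f : A → L) (φ : A → B → L) : B → L := fun b => ⨆ a, f a * φ a b

/-- composition of a fuzzy relation with a fuzzy set -/
def rscomp (φ : A → B → L) (g : B → L) : A → L := fun a => ⨆ b, φ a b * g b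

/-- degree of overlapping of two fuzzy sets -/
def sdot (f g : A → L) : L := ⨆ a, f a * g a

/-- kernel `E_A^φ` of a fuzzy relation -/
def ker (φ : A → B → L) : A → A → L := fun a₁ a₂ => ⨅ b, bires (φ a₁ b) (φ a₂ b)

/-- co-kernel `E_B^φ` of a fuzzy relation -/
def coker (φ : A → B → L) : B → B → L := fun b₁ b₂ => ⨅ a, bires (φ a b₁) (φ a b₂)

/-- `φ` is an `L`-function -/
def IsLFun (φ : A → B → L) : Prop := ∀ a, ∃ b, φ a b = 1

/-- `φ` is surjective, i.e. `φ⁻¹` is an `L`-function -/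
def IsSurj (φ : A → B → L) : Prop := ∀ b, ∃ a, φ a b = 1

/-- `φ` is a partial fuzzy function: `φ ∘ φ⁻¹ ∘ φ ≤ φ` -/
def IsPFF (φ : A → B → L) : Prop := rcomp (rcomp φ (inv φ)) φ ≤ φ

/-- `φ` is a uniform fuzzy relation: a partial fuzzy function that is a
surjective `L`-function -/
def IsUniform (φ : A → B → L) : Prop := IsPFF φ ∧ IsLFun φ ∧ IsSurj φ

/-- the set of crisp descriptions of `φ` -/
def CR (φ : A → B → L) : Set (A → B) := {ψ | ∀ a, φ a (ψ a) = 1}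

/-- `ψ : A → B` is `F`-surjective -/
def SurjMod (F : B → B → L) (ψ : A → B) : Prop := ∀ b, ∃ a, F (ψ a) b = 1

/-- fuzzy equivalence relation -/
structure IsFuzzyEquiv (E : A → A → L) : Prop where
  refl : ∀ a, E a a = 1
  symm : ∀ a b, E a b = E b a
  trans : ∀ a b c, E a b * E b c ≤ E a c

/-- fuzzy equality -/
def IsFuzzyEquality (E : A → A → L) : Prop :=
  IsFuzzyEquiv E ∧ ∀ a b, E a b = 1 → a = b

/-- the factor set `A/E = {E_a : a ∈ A}` -/
abbrev FactorSet (E : A → A → L) := {f : A → L // ∃ a, E a = f}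

/-- the class `E_a` as an element of `A/E` -/
def toClass (E : A → A → L) (a : A) : FactorSet E := ⟨E a, a, rfl⟩

/-- a chosen representative of a class -/
noncomputable def rep {E : A → A → L} (c : FactorSet E) : A := c.2.choose

/-- the fuzzy relation `Ẽ` on `A/E` -/
noncomputable def tildeRel (E : A → A → L) : FactorSet E → FactorSet E → L :=
  fun c c' => E (rep c) (rep c')

open Classical in
/-- a chosen crisp description of `φ` -/
noncomputable def crispDesc [Nonempty B] (φ : A → B → L) : A → B :=
  fun a => if h : ∃ b, φ a b = 1 then h.choose else Classical.arbitrary B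

/-- the induced map `φ̃ : A/E_A^φ → B/E_B^φ`, `φ̃(E_a) = F_{ψ(a)}` -/
noncomputable def tilde [Nonempty B] (φ : A → B → L) :
    FactorSet (ker φ) → FactorSet (coker φ) :=
  fun c => toClass (coker φ) (crispDesc φ (rep c))

/-- the fuzzy transition relation `δ_x` -/
def FuzzyAutomaton.δx (M : FuzzyAutomaton L X A) (x : X) : A → A → L := fun a b => M.δ a x b

open Classical in
/-- transitions extended to words -/
noncomputable def deltaWord (M : FuzzyAutomaton L X A) : List X → A → A → L
  | [] => fun a b => if a = b then (1 : L) else ⊥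
  | x :: u => rcomp (M.δx x) (deltaWord M u)

/-- the fuzzy language recognized by `M` : `L(M)(u) = σ ∘ δ_u ∘ τ` -/
noncomputable def lang (M : FuzzyAutomaton L X A) (u : List X) : L :=
  sdot (scomp M.σ (deltaWord M u)) M.τ

/-- forward simulation -/
def IsForwardSim (MA : FuzzyAutomaton L X A) (MB : FuzzyAutomaton L X B)
    (φ : A → B → L) : Prop :=
  MA.σ ≤ scomp MB.σ (inv φ) ∧
  (∀ x, rcomp (inv φ) (MA.δx x) ≤ rcomp (MB.δx x) (inv φ)) ∧
  rscomp (inv φ) MA.τ ≤ MB.τ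

/-- backward simulation -/
def IsBackwardSim (MA : FuzzyAutomaton L X A) (MB : FuzzyAutomaton L X B)
    (φ : A → B → L) : Prop :=
  scomp MA.σ φ ≤ MB.σ ∧
  (∀ x, rcomp (MA.δx x) φ ≤ rcomp φ (MB.δx x)) ∧
  MA.τ ≤ rscomp φ MB.τ

/-- forward bisimulation -/
def IsForwardBisim (MA : FuzzyAutomaton L X A) (MB : FuzzyAutomaton L X B)
    (φ : A → B → L) : Prop :=
  IsForwardSim MA MB φ ∧ IsForwardSim MB MA (inv φ)

/-- backward bisimulation -/
def IsBackwardBisim (MA : FuzzyAutomaton L X A) (MB : FuzzyAutomaton L X B)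
    (φ : A → B → L) : Prop :=
  IsBackwardSim MA MB φ ∧ IsBackwardSim MB MA (inv φ)

/-- backward-forward bisimulation -/
def IsBFBisim (MA : FuzzyAutomaton L X A) (MB : FuzzyAutomaton L X B)
    (φ : A → B → L) : Prop :=
  IsBackwardSim MA MB φ ∧ IsForwardSim MB MA (inv φ)

/-- forward-backward bisimulation -/
def IsFBBisim (MA : FuzzyAutomaton L X A) (MB : FuzzyAutomaton L X B)
    (φ : A → B → L) : Prop :=
  IsForwardSim MA MB φ ∧ IsBackwardSim MB MA (inv φ)

/-- isomorphism of fuzzy automata -/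
def IsIso (MA : FuzzyAutomaton L X A) (MB : FuzzyAutomaton L X B) (h : A → B) : Prop :=
  Function.Bijective h ∧
  (∀ (a₁ : A) (x : X) (a₂ : A), MA.δ a₁ x a₂ = MB.δ (h a₁) x (h a₂)) ∧
  (∀ a, MA.σ a = MB.σ (h a)) ∧
  (∀ a, MA.τ a = MB.τ (h a))

/-- the factor fuzzy automaton `𝓐/E` -/
noncomputable def factorAut (M : FuzzyAutomaton L X A) (E : A → A → L) :
    FuzzyAutomaton L X (FactorSet E) where
  δ := fun c x c' => rcomp (rcomp E (M.δx x)) E (rep c) (rep c')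
  σ := fun c => scomp M.σ E (rep c)
  τ := fun c => rscomp E M.τ (rep c)

/-- the natural fuzzy relation `φ(a₁, E_{a₂}) = E(a₁,a₂)` between `A` and `A/E` -/
def natRel (E : A → A → L) : A → FactorSet E → L := fun a c => c.1 a

/-- the fuzzy relation `G/E` on `A/E` -/
noncomputable def quotRel (E G : A → A → L) : FactorSet E → FactorSet E → L :=
  fun c c' => G (rep c) (rep c')

/-- the fuzzy relation `φ(a₁, E_{a₂}) = G(a₁,a₂)` between `A` and `A/E` -/
noncomputable def quotNatRel (E G : A → A → L) : A → FactorSet E → L :=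
  fun a c => G a (rep c)

/-- UFB-equivalence of fuzzy automata -/
def UFBEquiv (MA : FuzzyAutomaton L X A) (MB : FuzzyAutomaton L X B) : Prop :=
  ∃ φ : A → B → L, IsUniform φ ∧ IsForwardBisim MA MB φ

section Helpers

open CompleteResiduatedLattice

variable {D : Type*}

lemma crl_mul_le_mul_left {x y y' : L} (h : y ≤ y') : x * y ≤ x * y' := by
  rw [mul_comm, adjunction]
  exact h.trans ((adjunction y' x (x * y')).mp (le_of_eq (mul_comm y' x)))

lemma crl_mul_le_mul_right {x x' y : L} (h : x ≤ x') : x * y ≤ x' * y := by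
  rw [mul_comm x y, mul_comm x' y]; exact crl_mul_le_mul_left h

lemma crl_mul_le_mul {x x' y y' : L} (h1 : x ≤ x') (h2 : y ≤ y') : x * y ≤ x' * y' :=
  (crl_mul_le_mul_left h2).trans (crl_mul_le_mul_right h1)

lemma crl_iSup_mul {ι : Sort*} (f : ι → L) (a : L) : (⨆ i, f i) * a = ⨆ i, f i * a := by
  apply le_antisymm
  · rw [adjunction]
    exact iSup_le fun i => (adjunction _ _ _).mp (le_iSup (fun i => f i * a) i)
  · exact iSup_le fun i => crl_mul_le_mul_right (le_iSup f i)

lemma crl_mul_iSup {ι : Sort*} (a : L) (f : ι → L) : a * (⨆ i, f i) = ⨆ i, a * f i := by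
  rw [mul_comm, crl_iSup_mul]
  simp only [mul_comm]

lemma rcomp_assoc (φ : A → B → L) (ψ : B → C → L) (θ : C → D → L) :
    rcomp (rcomp φ ψ) θ = rcomp φ (rcomp ψ θ) := by
  funext a d
  simp only [rcomp, crl_iSup_mul, crl_mul_iSup, mul_assoc]
  exact iSup_comm

lemma scomp_rcomp (f : A → L) (φ : A → B → L) (ψ : B → C → L) :
    scomp (scomp f φ) ψ = scomp f (rcomp φ ψ) := by
  funext c
  simp only [scomp, rcomp, crl_iSup_mul, crl_mul_iSup, mul_assoc]
  exact iSup_comm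

lemma rscomp_rcomp (φ : A → B → L) (ψ : B → C → L) (g : C → L) :
    rscomp (rcomp φ ψ) g = rscomp φ (rscomp ψ g) := by
  funext a
  simp only [rscomp, rcomp, crl_iSup_mul, crl_mul_iSup, mul_assoc]
  exact iSup_comm

lemma inv_rcomp (φ : A → B → L) (ψ : B → C → L) :
    inv (rcomp φ ψ) = rcomp (inv ψ) (inv φ) := by
  funext c a
  simp only [inv, rcomp, mul_comm]

lemma scomp_mono {f f' : A → L} {φ φ' : A → B → L} (hf : f ≤ f') (hφ : φ ≤ φ') :
    scomp f φ ≤ scomp f' φ' := fun b =>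
  iSup_le fun a => (crl_mul_le_mul (hf a) (hφ a b)).trans (le_iSup (fun a => f' a * φ' a b) a)

lemma rcomp_mono {φ φ' : A → B → L} {ψ ψ' : B → C → L} (hφ : φ ≤ φ') (hψ : ψ ≤ ψ') :
    rcomp φ ψ ≤ rcomp φ' ψ' := fun a c =>
  iSup_le fun b => (crl_mul_le_mul (hφ a b) (hψ b c)).trans
    (le_iSup (fun b => φ' a b * ψ' b c) b)

lemma rscomp_mono {φ φ' : A → B → L} {g g' : B → L} (hφ : φ ≤ φ') (hg : g ≤ g') :
    rscomp φ g ≤ rscomp φ' g' := fun a =>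
  iSup_le fun b => (crl_mul_le_mul (hφ a b) (hg b)).trans (le_iSup (fun b => φ' a b * g' b) b)

lemma fsim_comp {MA : FuzzyAutomaton L X A} {MB : FuzzyAutomaton L X B}
    {MC : FuzzyAutomaton L X C} {φ : A → B → L} {ψ : B → C → L}
    (hφ : IsForwardSim MA MB φ) (hψ : IsForwardSim MB MC ψ) :
    IsForwardSim MA MC (rcomp φ ψ) := by
  obtain ⟨hσ1, hδ1, hτ1⟩ := hφ
  obtain ⟨hσ2, hδ2, hτ2⟩ := hψ
  refine ⟨?_, ?_, ?_⟩
  · rw [inv_rcomp, ← scomp_rcomp]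
    exact hσ1.trans (scomp_mono hσ2 le_rfl)
  · intro x
    rw [inv_rcomp, rcomp_assoc]
    calc rcomp (inv ψ) (rcomp (inv φ) (MA.δx x))
        ≤ rcomp (inv ψ) (rcomp (MB.δx x) (inv φ)) := rcomp_mono le_rfl (hδ1 x)
      _ = rcomp (rcomp (inv ψ) (MB.δx x)) (inv φ) := (rcomp_assoc _ _ _).symm
      _ ≤ rcomp (rcomp (MC.δx x) (inv ψ)) (inv φ) := rcomp_mono (hδ2 x) le_rfl
      _ = rcomp (MC.δx x) (rcomp (inv ψ) (inv φ)) := rcomp_assoc _ _ _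
  · rw [inv_rcomp, rscomp_rcomp]
    exact (rscomp_mono le_rfl hτ1).trans hτ2

lemma fbisim_inv {MA : FuzzyAutomaton L X A} {MB : FuzzyAutomaton L X B} {φ : A → B → L}
    (hφ : IsForwardBisim MA MB φ) : IsForwardBisim MB MA (inv φ) :=
  ⟨hφ.2, hφ.1⟩

lemma fbisim_comp {MA : FuzzyAutomaton L X A} {MB : FuzzyAutomaton L X B}
    {MC : FuzzyAutomaton L X C} {φ : A → B → L} {ψ : B → C → L}
    (hφ : IsForwardBisim MA MB φ) (hψ : IsForwardBisim MB MC ψ) :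
    IsForwardBisim MA MC (rcomp φ ψ) := by
  refine ⟨fsim_comp hφ.1 hψ.1, ?_⟩
  rw [inv_rcomp]
  exact fsim_comp hψ.2 hφ.2

lemma fsim_iSup {ι : Sort*} [Nonempty ι]
    {MA : FuzzyAutomaton L X A} {MB : FuzzyAutomaton L X B}
    (f : ι → A → B → L) (hf : ∀ i, IsForwardSim MA MB (f i)) :
    IsForwardSim MA MB (fun a b => ⨆ i, f i a b) := by
  set Φ : A → B → L := fun a b => ⨆ i, f i a b with hΦ
  have hle : ∀ i, f i ≤ Φ := fun i a b => le_iSup (fun j => f j a b) i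
  have hlei : ∀ i, inv (f i) ≤ inv Φ := fun i b a => hle i a b
  refine ⟨?_, ?_, ?_⟩
  · exact (hf (Classical.arbitrary ι)).1.trans (scomp_mono le_rfl (hlei _))
  · intro x b a'
    have he : rcomp (inv Φ) (MA.δx x) b a' = ⨆ a, ⨆ i, f i a b * MA.δx x a a' := by
      simp only [rcomp, inv, hΦ, crl_iSup_mul]
    rw [he]
    refine iSup_le fun a => iSup_le fun i => ?_
    refine le_trans (le_trans (le_iSup (fun a => inv (f i) b a * MA.δx x a a') a)
      ((hf i).2.1 x b a')) ?_
    exact rcomp_mono le_rfl (hlei i) b a'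
  · intro b
    have he : rscomp (inv Φ) MA.τ b = ⨆ a, ⨆ i, f i a b * MA.τ a := by
      simp only [rscomp, inv, hΦ, crl_iSup_mul]
    rw [he]
    refine iSup_le fun a => iSup_le fun i => ?_
    exact le_trans (le_iSup (fun a => inv (f i) b a * MA.τ a) a) ((hf i).2.2 b)

end Helpers

/-- existence of the greatest forward bisimulation -/
theorem greatest_forwardBisim {L X A B : Type*} [CompleteResiduatedLattice L]
    [Nonempty A] [Nonempty B]
    (MA : FuzzyAutomaton L X A) (MB : FuzzyAutomaton L X B)
    (h : ∃ χ : A → B → L, IsForwardBisim MA MB χ) :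
    ∃ φ : A → B → L, IsForwardBisim MA MB φ ∧
      (∀ χ : A → B → L, IsForwardBisim MA MB χ → χ ≤ φ) ∧
      IsPFF φ := by
  obtain ⟨χ₀, hχ₀⟩ := h
  haveI : Nonempty {χ : A → B → L // IsForwardBisim MA MB χ} := ⟨⟨χ₀, hχ₀⟩⟩
  set Φ : A → B → L :=
    fun a b => ⨆ χ : {χ : A → B → L // IsForwardBisim MA MB χ}, χ.1 a b with hΦ
  have hle : ∀ χ : A → B → L, IsForwardBisim MA MB χ → χ ≤ Φ := by
    intro χ hχ a b
    exact le_iSup (fun c : {χ : A → B → L // IsForwardBisim MA MB χ} => c.1 a b) ⟨χ, hχ⟩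
  have hbisim : IsForwardBisim MA MB Φ := by
    constructor
    · exact fsim_iSup (fun χ : {χ : A → B → L // IsForwardBisim MA MB χ} => χ.1)
        (fun χ => χ.2.1)
    · exact fsim_iSup (fun χ : {χ : A → B → L // IsForwardBisim MA MB χ} => inv χ.1)
        (fun χ => χ.2.2)
  refine ⟨Φ, hbisim, hle, ?_⟩
  exact hle _ (fbisim_comp (fbisim_comp hbisim (fbisim_inv hbisim)) hbisim)

end FuzzyAutomataBisim
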